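/- arXiv:1207.0870 — 5 statements merged into one kernel-verified Lean document; each statement's English description precedes it below -/
import Mathlib

section
/- For every LTL+ formula φ (built from true, false, atomic propositions, conjunction, disjunction, next, until, and release — no negation) and every finite word σ over the alphabet of subsets of atomic propositions, the infinite word σ∅^ω satisfies φ if and only if σρ satisfies φ for every infinite word ρ. -/
open MeasureTheory

/- ## LTL⁺ syntax and semantics -/

inductive LTLPlus (AP : Type) : Type where
  | tt : LTLPlus AP
  | ff : LTLPlus AP
  | atom : AP → LTLPlus AP
  | and : LTLPlus AP → LTLPlus AP → LTLPlus AP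
  | or : LTLPlus AP → LTLPlus AP → LTLPlus AP
  | next : LTLPlus AP → LTLPlus AP
  | untl : LTLPlus AP → LTLPlus AP → LTLPlus AP
  | release : LTLPlus AP → LTLPlus AP → LTLPlus AP

variable {AP : Type}

/-- The suffix `ρ[k…]` of an infinite word. -/
def shift (ρ : ℕ → Set AP) (k : ℕ) : ℕ → Set AP := fun n => ρ (n + k)

/-- Standard LTL satisfaction for the positive fragment. -/
def LTLSat : LTLPlus AP → (ℕ → Set AP) → Prop
  | .tt, _ => True
  | .ff, _ => False
  | .atom a, ρ => a ∈ ρ 0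
  | .and φ ψ, ρ => LTLSat φ ρ ∧ LTLSat ψ ρ
  | .or φ ψ, ρ => LTLSat φ ρ ∨ LTLSat ψ ρ
  | .next φ, ρ => LTLSat φ (shift ρ 1)
  | .untl φ ψ, ρ => ∃ j, LTLSat ψ (shift ρ j) ∧ ∀ i < j, LTLSat φ (shift ρ i)
  | .release φ ψ, ρ => ∀ j, LTLSat ψ (shift ρ j) ∨ ∃ i < j, LTLSat φ (shift ρ i)

/-- Concatenation `σρ` of a finite word with an infinite word. -/
def wcat (σ : List (Set AP)) (ρ : ℕ → Set AP) : ℕ → Set AP :=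
  fun n => if h : n < σ.length then σ.get ⟨n, h⟩ else ρ (n - σ.length)

/- ## Probabilistic transition systems -/

variable {State Tr : Type}

structure PTS (State Tr AP : Type) where
  states : Set State
  transitions : Set Tr
  countable_states : states.Countable
  countable_transitions : transitions.Countable
  init : State
  init_mem : init ∈ states
  source : Tr → State
  target : Tr → State
  prob : Tr → ℝ
  label : State → Set AP
  source_mem : ∀ t ∈ transitions, source t ∈ states
  target_mem : ∀ t ∈ transitions, target t ∈ states
  prob_pos : ∀ t ∈ transitions, 0 < prob t
  prob_le_one : ∀ t ∈ transitions, prob t ≤ 1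
  prob_sum : ∀ s ∈ states,
    (∑' t : { t : Tr // t ∈ transitions ∧ source t = s }, prob t.1) = 1

/-- An execution path: an infinite sequence of transitions starting at the
initial state, with matching targets and sources. -/
def PTS.IsExec (S : PTS State Tr AP) (e : ℕ → Tr) : Prop :=
  (∀ i, e i ∈ S.transitions) ∧ S.source (e 0) = S.init ∧
    ∀ i, S.target (e i) = S.source (e (i + 1))

/-- The finite sequence `l` is a prefix of the infinite sequence `e`. -/
def IsPrefixOf (l : List Tr) (e : ℕ → Tr) : Prop :=
  ∀ i : ℕ, ∀ h : i < l.length, l.get ⟨i, h⟩ = e i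

/-- `l` is a finite prefix of some execution path of `S`, i.e. `l ∈ pref(Exec_S)`. -/
def PTS.IsPrefExec (S : PTS State Tr AP) (l : List Tr) : Prop :=
  ∃ e, S.IsExec e ∧ IsPrefixOf l e

/-- The basic cylinder set `B_S^l` of a finite sequence of transitions. -/
def PTS.Cyl (S : PTS State Tr AP) (l : List Tr) : Set (ℕ → Tr) :=
  { e | S.IsExec e ∧ IsPrefixOf l e }

/-- `S'` extends the search `T` of `S`. -/
def PTS.Extends (S' S : PTS State Tr AP) (T : Finset Tr) : Prop :=
  (∀ t ∈ T, t ∈ S'.transitions) ∧ S'.init = S.init ∧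
    ∀ t ∈ T, S'.source t = S.source t ∧ S'.target t = S.target t ∧
      S'.prob t = S.prob t ∧
      S'.label (S'.source t) = S.label (S.source t) ∧
      S'.label (S'.target t) = S.label (S.target t)

/-- The trace of an execution path. -/
def PTS.traceOf (S : PTS State Tr AP) (e : ℕ → Tr) : ℕ → Set AP :=
  fun i => S.label (S.source (e i))

/-- Satisfaction `e ⊨_S φ` of a linear-time property (a set of infinite words). -/
def PTS.SatPath (S : PTS State Tr AP) (e : ℕ → Tr) (φ : Set (ℕ → Set AP)) : Prop :=
  S.traceOf e ∈ φ

instance : MeasurableSpace (ℕ → Tr) := ⊤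

/-- `μ` behaves as the cylinder measure of the PTS `S`:
`μ(B_S^{t₁…tₙ}) = Π prob(tᵢ)`. -/
def CylSpec (S : PTS State Tr AP) (μ : Measure (ℕ → Tr)) : Prop :=
  ∀ l : List Tr, S.IsPrefExec l →
    μ (S.Cyl l) = ENNReal.ofReal ((l.map S.prob).prod)

/-- The set `B_S^φ(T)`: union of the basic cylinder sets over `e ∈ T*` all of
whose execution paths satisfy `φ`. -/
def PTS.BPhi (S : PTS State Tr AP) (T : Finset Tr) (φ : Set (ℕ → Set AP)) :
    Set (ℕ → Tr) :=
  ⋃ l ∈ { l : List Tr | (∀ t ∈ l, t ∈ T) ∧ ∀ e ∈ S.Cyl l, S.SatPath e φ }, S.Cyl l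

/-- The set `E_S^φ(T)`. -/
def PTS.ESet (S : PTS State Tr AP) (T : Finset Tr) (φ : Set (ℕ → Set AP)) :
    Set (List Tr) :=
  { l | (∀ t ∈ l, t ∈ T) ∧ S.IsPrefExec l ∧ ∀ e ∈ S.Cyl l, S.SatPath e φ }

/-- The set `ME_S^φ(T)` of prefix-minimal elements of `E_S^φ(T)`. -/
def PTS.MESet (S : PTS State Tr AP) (T : Finset Tr) (φ : Set (ℕ → Set AP)) :
    Set (List Tr) :=
  { l ∈ S.ESet T φ | 0 < l.length → ∃ e ∈ S.Cyl l.dropLast, ¬ S.SatPath e φ }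

/-- The progress measure, relative to an assignment `M` of (cylinder) measures
to PTSs: the infimum over all extensions `S'` of `T` of `μ_{S'}(B_{S'}^φ(T))`. -/
noncomputable def progM (M : PTS State Tr AP → Measure (ℕ → Tr))
    (S : PTS State Tr AP) (T : Finset Tr) (φ : Set (ℕ → Set AP)) : ENNReal :=
  ⨅ S' : { S' : PTS State Tr AP // S'.Extends S T }, M S'.1 ((S'.1).BPhi T φ)

/-- The search `T` of `S` has not found a violation of `φ`. -/
def NotFoundViolation (S : PTS State Tr AP) (T : Finset Tr)
    (φ : Set (ℕ → Set AP)) : Prop :=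
  ∃ S' : PTS State Tr AP, S'.Extends S T ∧ ∀ e, S'.IsExec e → S'.SatPath e φ

/- ## The minimal extension S_T -/

open Classical in
/-- `out_S(s)`: total explored outgoing probability of `s`. -/
noncomputable def outP (S : PTS State Tr AP) (T : Finset Tr) (s : State) : ℝ :=
  ∑ t ∈ T.filter (fun t => S.source t = s), S.prob t

/-- The set `S^T_S` of explored states. -/
def STStates (S : PTS State Tr AP) (T : Finset Tr) : Set State :=
  S.source '' ↑T ∪ S.target '' ↑T ∪ {S.init}

/-- `ST` is (a copy of) the minimal extension `S_T` of the search `T` of `S`: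
it has the explored states plus a fresh sink state `s⊥` with empty label and a
probability-one self loop `t⊥`, the explored transitions with unchanged data,
and, for each explored state with explored outgoing probability less than one,
a fresh transition to the sink carrying the residual probability. -/
def IsMinExt (S : PTS State Tr AP) (T : Finset Tr) (ST : PTS State Tr AP) : Prop :=
  ∃ (sbot : State) (tbot : Tr) (ts : State → Tr),
    sbot ∉ STStates S T ∧
    (∀ s, ts s ∉ T) ∧ tbot ∉ T ∧ (∀ s, ts s ≠ tbot) ∧
    Set.InjOn ts { s ∈ STStates S T | outP S T s < 1 } ∧
    ST.states = STStates S T ∪ {sbot} ∧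
    ST.transitions = ↑T ∪ ts '' { s ∈ STStates S T | outP S T s < 1 } ∪ {tbot} ∧
    ST.init = S.init ∧
    (∀ t ∈ T, ST.source t = S.source t ∧ ST.target t = S.target t ∧
      ST.prob t = S.prob t) ∧
    (∀ s ∈ STStates S T, outP S T s < 1 →
      ST.source (ts s) = s ∧ ST.target (ts s) = sbot ∧
      ST.prob (ts s) = 1 - outP S T s) ∧
    ST.source tbot = sbot ∧ ST.target tbot = sbot ∧ ST.prob tbot = 1 ∧
    ST.label sbot = ∅ ∧ (∀ s ∈ STStates S T, ST.label s = S.label s)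

/- ## Truncations and the prefix metric -/

/-- `e[n]`: the execution path `e` truncated at length `n`. -/
def trunc (e : ℕ → Tr) (n : ℕ) : List Tr := (List.range n).map e

/-- The distance `d(e₁,e₂) = inf { 2^{-n} : e₁[n] = e₂[n] }`. -/
noncomputable def pathDist (e₁ e₂ : ℕ → Tr) : ℝ :=
  sInf ((fun n : ℕ => ((1 : ℝ) / 2) ^ n) '' { n | trunc e₁ n = trunc e₂ n })

/-- `A` is closed with respect to the metric `pathDist`. -/
def ClosedPaths (A : Set (ℕ → Tr)) : Prop :=
  ∀ e, (∀ ε : ℝ, 0 < ε → ∃ e' ∈ A, pathDist e' e < ε) → e ∈ A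

/-! Without negation, satisfaction of an LTL⁺ formula is monotone in the letters of the word,
and `σ∅^ω` is the least word extending `σ`. -/

lemma shift_monotone (k : ℕ) : Monotone fun ρ : ℕ → Set AP => shift ρ k :=
  fun _ _ h n => h (n + k)

lemma LTLSat.monotone (φ : LTLPlus AP) : Monotone (LTLSat φ) := by
  induction φ with
  | tt | ff => exact fun _ _ _ => id
  | atom a => exact fun _ _ h => @h 0 a
  | and φ ψ ihφ ihψ => exact fun _ _ h => And.imp (ihφ h) (ihψ h)
  | or φ ψ ihφ ihψ => exact fun _ _ h => Or.imp (ihφ h) (ihψ h)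
  | next φ ih => exact fun _ _ h => ih (shift_monotone 1 h)
  | untl φ ψ ihφ ihψ =>
      rintro _ _ h ⟨j, hj, hi⟩
      exact ⟨j, ihψ (shift_monotone j h) hj,
        fun i hij => ihφ (shift_monotone i h) (hi i hij)⟩
  | release φ ψ ihφ ihψ =>
      intro _ _ h hrel j
      exact (hrel j).imp (ihψ (shift_monotone j h))
        fun ⟨i, hij, hi⟩ => ⟨i, hij, ihφ (shift_monotone i h) hi⟩

lemma wcat_monotone (σ : List (Set AP)) : Monotone (wcat σ) := by
  intro _ _ h n
  unfold wcat
  split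
  · exact le_rfl
  · exact h _

/-- For every LTL⁺ formula `φ` and finite word `σ`,
`σ∅^ω ⊨ φ` iff `σρ ⊨ φ` for every infinite word `ρ`. -/
theorem ltlplus_empty_suffix_iff_all {AP : Type} (φ : LTLPlus AP) (σ : List (Set AP)) :
    LTLSat φ (wcat σ (fun _ => (∅ : Set AP))) ↔
      ∀ ρ : ℕ → Set AP, LTLSat φ (wcat σ ρ) :=
  ⟨fun h _ => LTLSat.monotone φ (wcat_monotone σ bot_le) h, fun h => h _⟩
end

section
/- If the progress of a search T of a PTS S with respect to the linear-time property ¬φ is strictly positive, then T has found a violation of φ, i.e., for every PTS S' extending T of S there exists an execution path of S' not satisfying φ. -/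
open MeasureTheory

variable {AP : Type}

/- ## Probabilistic transition systems -/

variable {State Tr : Type}

theorem PTS.isExec_and_satPath_of_mem_BPhi {S : PTS State Tr AP} {T : Finset Tr}
    {φ : Set (ℕ → Set AP)} {e : ℕ → Tr} (he : e ∈ S.BPhi T φ) :
    S.IsExec e ∧ S.SatPath e φ := by
  simp only [PTS.BPhi, Set.mem_iUnion] at he
  obtain ⟨l, ⟨-, hsat⟩, hel⟩ := he
  exact ⟨hel.1, hsat e hel⟩

theorem progM_le_of_extends (M : PTS State Tr AP → Measure (ℕ → Tr))
    {S S' : PTS State Tr AP} {T : Finset Tr} (φ : Set (ℕ → Set AP))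
    (hext : S'.Extends S T) : progM M S T φ ≤ M S' (S'.BPhi T φ) :=
  iInf_le (fun S'' : { S'' : PTS State Tr AP // S''.Extends S T } =>
    M S''.1 (S''.1.BPhi T φ)) ⟨S', hext⟩

theorem found_violation_of_prog_pos_general {State Tr AP : Type} (S : PTS State Tr AP)
    (T : Finset Tr) (φ : Set (ℕ → Set AP))
    (M : PTS State Tr AP → MeasureTheory.Measure (ℕ → Tr))
    (hpos : 0 < progM M S T φᶜ) :
    ∀ S' : PTS State Tr AP, S'.Extends S T →
      ∃ e, S'.IsExec e ∧ ¬ S'.SatPath e φ := by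
  intro S' hext
  have hBPhi_pos : 0 < M S' (S'.BPhi T φᶜ) := hpos.trans_le (progM_le_of_extends M φᶜ hext)
  obtain ⟨e, he⟩ := nonempty_of_measure_ne_zero hBPhi_pos.ne'
  exact ⟨e, PTS.isExec_and_satPath_of_mem_BPhi he⟩

/-- If `prog_S(T, ¬φ) > 0` then `T` has found a violation of
`φ`: every extension of `T` has an execution path not satisfying `φ`. -/
theorem found_violation_of_prog_pos {State Tr AP : Type} (S : PTS State Tr AP)
    (T : Finset Tr) (hT : ↑T ⊆ S.transitions) (φ : Set (ℕ → Set AP))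
    (M : PTS State Tr AP → MeasureTheory.Measure (ℕ → Tr))
    (hM : ∀ S', CylSpec S' (M S'))
    (hpos : 0 < progM M S T φᶜ) :
    ∀ S' : PTS State Tr AP, S'.Extends S T →
      ∃ e, S'.IsExec e ∧ ¬ S'.SatPath e φ :=
  found_violation_of_prog_pos_general S T φ M hpos
end

section
/- If a search T of a PTS S has found a violation of the invariant □a (that is, in every PTS extending T of S some execution path violates □a), then prog_S(T, ¬□a) > 0. -/
open MeasureTheory

variable {AP : Type}

/- ## Probabilistic transition systems -/

variable {State Tr : Type}

/-
Suppose some endpoint `s` of an explored transition lacks `a` and is reached from the initial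
state by a path `l` of explored transitions. Every extension keeps these transitions, their
probabilities and the labels of their endpoints, so in every extension all executions in the
cylinder of `l` violate `□a`, and the progress is at least the (positive) probability of `l`.
Otherwise, redirect every unexplored transition of `S` to a self-loop and add `a` to the labels
of all states that are not explored endpoints. In this extension executions only visit states
reachable by explored transitions, all of which carry `a`, so no execution violates `□a`,
contrary to the hypothesis.
-/

namespace PTS

variable {State Tr AP : Type}

section Paths

variable (P : PTS State Tr AP)

def IsRunFrom (x : State) (e : ℕ → Tr) : Prop :=
  (∀ i, e i ∈ P.transitions) ∧ P.source (e 0) = x ∧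
    ∀ i, P.target (e i) = P.source (e (i + 1))

def IsPath : State → List Tr → State → Prop
  | x, [], y => x = y
  | x, t :: l, y => P.source t = x ∧ IsPath (P.target t) l y

theorem exists_source_eq {s : State} (hs : s ∈ P.states) :
    ∃ t ∈ P.transitions, P.source t = s := by
  by_contra! h
  have : IsEmpty { t // t ∈ P.transitions ∧ P.source t = s } :=
    ⟨fun t => h t.1 t.2.1 t.2.2⟩
  simpa using P.prob_sum s hs

theorem exists_isRunFrom {s : State} (hs : s ∈ P.states) : ∃ e, P.IsRunFrom s e := by
  choose f hf hsrc using fun x : P.states => P.exists_source_eq x.2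
  let walk : ℕ → P.states :=
    fun n => Nat.rec ⟨s, hs⟩ (fun _ x => ⟨P.target (f x), P.target_mem _ (hf x)⟩) n
  exact ⟨fun n => f (walk n), fun _ => hf _, hsrc _, fun i => (hsrc (walk (i + 1))).symm⟩

variable {P}

theorem IsPath.append_singleton {x y : State} {l : List Tr} {t : Tr} (h : P.IsPath x l y)
    (ht : P.source t = y) : P.IsPath x (l ++ [t]) (P.target t) := by
  induction l generalizing x with
  | nil => exact ⟨ht.trans h.symm, rfl⟩
  | cons u l ih => exact ⟨h.1, ih h.2⟩

theorem IsPath.source_length_eq {x y : State} {l : List Tr} {e : ℕ → Tr}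
    (h : P.IsPath x l y) (he₀ : P.source (e 0) = x)
    (he : ∀ i, P.target (e i) = P.source (e (i + 1))) (hle : IsPrefixOf l e) :
    P.source (e l.length) = y := by
  induction l generalizing x e with
  | nil => exact he₀.trans h
  | cons t l ih =>
    have ht : e 0 = t := (hle 0 (by simp)).symm
    exact ih h.2 (by rw [← he 0, ht]) (fun i => he (i + 1))
      (fun i hi => hle (i + 1) (Nat.succ_lt_succ hi))

theorem IsPath.exists_isRunFrom {x y : State} {l : List Tr} (h : P.IsPath x l y)
    (hx : x ∈ P.states) (hl : ∀ t ∈ l, t ∈ P.transitions) :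
    ∃ e, P.IsRunFrom x e ∧ IsPrefixOf l e := by
  induction l generalizing x with
  | nil => exact (P.exists_isRunFrom hx).imp fun e he => ⟨he, fun i hi => absurd hi (by simp)⟩
  | cons t l ih =>
    have ht : t ∈ P.transitions := hl t List.mem_cons_self
    obtain ⟨e, ⟨hmem, he₀, he⟩, hle⟩ :=
      ih h.2 (P.target_mem t ht) fun u hu => hl u (List.mem_cons_of_mem t hu)
    refine ⟨fun n => Nat.casesOn n t e, ⟨fun i => ?_, h.1, fun i => ?_⟩, fun i hi => ?_⟩
    · cases i with
      | zero => exact ht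
      | succ i => exact hmem i
    · cases i with
      | zero => exact he₀.symm
      | succ i => exact he i
    · cases i with
      | zero => rfl
      | succ i => exact hle i (Nat.lt_of_succ_lt_succ hi)

theorem IsPath.isPrefExec {y : State} {l : List Tr} (h : P.IsPath P.init l y)
    (hl : ∀ t ∈ l, t ∈ P.transitions) : P.IsPrefExec l :=
  h.exists_isRunFrom P.init_mem hl

end Paths

def endpoints (S : PTS State Tr AP) (T : Finset Tr) : Set State :=
  S.source '' ↑T ∪ S.target '' ↑T

def ReachableWithin (S : PTS State Tr AP) (T : Finset Tr) (s : State) : Prop :=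
  ∃ l : List Tr, (∀ t ∈ l, t ∈ T) ∧ S.IsPath S.init l s

section Extends

variable {S' S : PTS State Tr AP} {T : Finset Tr}

theorem Extends.isPath (h : S'.Extends S T) {x y : State} {l : List Tr}
    (hl : ∀ t ∈ l, t ∈ T) (hpath : S.IsPath x l y) : S'.IsPath x l y := by
  induction l generalizing x with
  | nil => exact hpath
  | cons t l ih =>
    obtain ⟨hsrc, htgt, -⟩ := h.2.2 t (hl t List.mem_cons_self)
    exact ⟨hsrc.trans hpath.1, htgt ▸ ih (fun u hu => hl u (List.mem_cons_of_mem t hu)) hpath.2⟩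

theorem Extends.label_eq (h : S'.Extends S T) {s : State} (hs : s ∈ S.endpoints T) :
    S'.label s = S.label s := by
  rcases hs with ⟨t, ht, rfl⟩ | ⟨t, ht, rfl⟩
  · obtain ⟨hsrc, -, -, hlabel, -⟩ := h.2.2 t ht
    rwa [hsrc] at hlabel
  · obtain ⟨-, htgt, -, -, hlabel⟩ := h.2.2 t ht
    rwa [htgt] at hlabel

theorem Extends.map_prob (h : S'.Extends S T) {l : List Tr} (hl : ∀ t ∈ l, t ∈ T) :
    l.map S'.prob = l.map S.prob :=
  List.map_congr_left fun t ht => (h.2.2 t (hl t ht)).2.2.1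

end Extends

theorem prod_prob_pos (S : PTS State Tr AP) {l : List Tr} (hl : ∀ t ∈ l, t ∈ S.transitions) :
    0 < (l.map S.prob).prod :=
  List.prod_pos fun _ hp => by
    obtain ⟨t, ht, rfl⟩ := List.mem_map.1 hp
    exact S.prob_pos t (hl t ht)

theorem cyl_subset_bPhi_compl_invariant (P : PTS State Tr AP) {T : Finset Tr} {l : List Tr}
    {s : State} {a : AP} (hl : ∀ t ∈ l, t ∈ T) (hpath : P.IsPath P.init l s)
    (hs : a ∉ P.label s) : P.Cyl l ⊆ P.BPhi T { ρ | ∀ i, a ∈ ρ i }ᶜ := by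
  refine fun e he => Set.mem_biUnion (x := l) ⟨hl, fun e' he' ha => ?_⟩ he
  exact hs (hpath.source_length_eq he'.1.2.1 he'.1.2.2 he'.2 ▸ ha l.length)

theorem Extends.ofReal_prod_prob_le_bPhi {S' S : PTS State Tr AP} {T : Finset Tr}
    {μ : Measure (ℕ → Tr)} (hμ : CylSpec S' μ) (h : S'.Extends S T) {l : List Tr} {s : State}
    {a : AP} (hl : ∀ t ∈ l, t ∈ T) (hpath : S.IsPath S.init l s) (hs : s ∈ S.endpoints T)
    (ha : a ∉ S.label s) :
    ENNReal.ofReal (l.map S.prob).prod ≤ μ (S'.BPhi T { ρ | ∀ i, a ∈ ρ i }ᶜ) := by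
  have hpath' : S'.IsPath S'.init l s := h.2.1 ▸ h.isPath hl hpath
  calc ENNReal.ofReal (l.map S.prob).prod
      = μ (S'.Cyl l) := by
        rw [hμ l (hpath'.isPrefExec fun t ht => h.1 t (hl t ht)), h.map_prob hl]
    _ ≤ μ (S'.BPhi T { ρ | ∀ i, a ∈ ρ i }ᶜ) :=
        measure_mono (S'.cyl_subset_bPhi_compl_invariant hl hpath' (h.label_eq hs ▸ ha))

open Classical in
/-- Sources and probabilities are those of `S`, so the probability axioms carry over unchanged. -/
noncomputable def redirect (S : PTS State Tr AP) (T : Finset Tr) (label : State → Set AP) :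
    PTS State Tr AP :=
  { S with
    target := fun t => if t ∈ T then S.target t else S.source t
    label := label
    target_mem := fun t ht => by
      split_ifs
      exacts [S.target_mem t ht, S.source_mem t ht] }

variable {S : PTS State Tr AP} {T : Finset Tr} {label : State → Set AP}

theorem redirect_extends (hT : ↑T ⊆ S.transitions)
    (hlabel : ∀ s ∈ S.endpoints T, label s = S.label s) : (S.redirect T label).Extends S T := by
  classical
  refine ⟨fun t ht => hT ht, rfl, fun t ht => ⟨rfl, if_pos ht, rfl, ?_, ?_⟩⟩
  · exact hlabel _ (Or.inl ⟨t, ht, rfl⟩)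
  · change label (if t ∈ T then _ else _) = _
    rw [if_pos ht]
    exact hlabel _ (Or.inr ⟨t, ht, rfl⟩)

theorem reachableWithin_source_of_isExec_redirect {e : ℕ → Tr}
    (he : (S.redirect T label).IsExec e) (i : ℕ) : S.ReachableWithin T (S.source (e i)) := by
  classical
  induction i with
  | zero => exact ⟨[], by simp, he.2.1.symm⟩
  | succ i ih =>
    obtain ⟨l, hl, hpath⟩ := ih
    have hstep : (if e i ∈ T then S.target (e i) else S.source (e i)) = S.source (e (i + 1)) :=
      he.2.2 i
    by_cases hi : e i ∈ T
    · rw [if_pos hi] at hstep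
      refine ⟨l ++ [e i], fun t ht => ?_, hstep ▸ hpath.append_singleton rfl⟩
      rcases List.mem_append.1 ht with ht | ht
      exacts [hl t ht, List.mem_singleton.1 ht ▸ hi]
    · rw [if_neg hi] at hstep
      exact ⟨l, hl, hstep ▸ hpath⟩

end PTS

/-- If the search `T` of `S` has found a violation of the
invariant `□a` (every extension has a violating execution path), then
`prog_S(T, ¬□a) > 0`. -/
theorem prog_pos_of_found_violation_invariant {State Tr AP : Type}
    (S : PTS State Tr AP) (T : Finset Tr) (hT : ↑T ⊆ S.transitions) (a : AP)
    (M : PTS State Tr AP → MeasureTheory.Measure (ℕ → Tr))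
    (hM : ∀ S', CylSpec S' (M S'))
    (hviol : ∀ S' : PTS State Tr AP, S'.Extends S T →
      ∃ e, S'.IsExec e ∧ ¬ S'.SatPath e { ρ | ∀ i, a ∈ ρ i }) :
    0 < progM M S T { ρ : ℕ → Set AP | ∀ i, a ∈ ρ i }ᶜ := by
  classical
  by_cases hfound : ∃ s ∈ S.endpoints T, S.ReachableWithin T s ∧ a ∉ S.label s
  · obtain ⟨s, hs, ⟨l, hl, hpath⟩, ha⟩ := hfound
    have hpos := S.prod_prob_pos fun t ht => hT (hl t ht)
    exact (ENNReal.ofReal_pos.2 hpos).trans_le <|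
      le_iInf fun S' => S'.2.ofReal_prod_prob_le_bPhi (hM S'.1) hl hpath hs ha
  · push Not at hfound
    let label s := if s ∈ S.endpoints T then S.label s else insert a (S.label s)
    obtain ⟨e, he, hviolates⟩ :=
      hviol (S.redirect T label) (PTS.redirect_extends hT fun s hs => if_pos hs)
    refine absurd (fun i => ?_) hviolates
    change a ∈ label (S.source (e i))
    by_cases hs : S.source (e i) ∈ S.endpoints T
    · simp only [label, if_pos hs]
      exact hfound _ hs (PTS.reachableWithin_source_of_isExec_redirect he i)
    · simp only [label, if_neg hs]
      exact Set.mem_insert a _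
end

section
/- If a search T of a PTS S has not found a violation of a linear-time property φ, then every execution path of the minimal extension S_T consisting solely of explored transitions satisfies φ: for all e ∈ T^ω ∩ Exec_{S_T}, e ⊨_{S_T} φ. -/
open MeasureTheory

variable {AP : Type}

/- ## Probabilistic transition systems -/

variable {State Tr : Type}

/-!
`S_T` is itself an extension of `T`. Any two extensions of `T` agree on the initial state and on
the source, target and source label of every explored transition, so a path in `T^ω` is an
execution of one exactly when it is one of the other, with the same trace. Applying this to `S_T`
and to an extension all of whose executions satisfy `φ` gives the claim.
-/

namespace PTS

variable {S S₁ S₂ : PTS State Tr AP} {T : Finset Tr} {e : ℕ → Tr}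

theorem Extends.source_eq_source (h₁ : S₁.Extends S T) (h₂ : S₂.Extends S T) {t : Tr}
    (ht : t ∈ T) : S₁.source t = S₂.source t :=
  ((h₁.2.2 t ht).1).trans ((h₂.2.2 t ht).1).symm

theorem Extends.target_eq_target (h₁ : S₁.Extends S T) (h₂ : S₂.Extends S T) {t : Tr}
    (ht : t ∈ T) : S₁.target t = S₂.target t :=
  ((h₁.2.2 t ht).2.1).trans ((h₂.2.2 t ht).2.1).symm

theorem Extends.isExec_of_isExec (h₁ : S₁.Extends S T) (h₂ : S₂.Extends S T)
    (heT : ∀ i, e i ∈ T) (he : S₁.IsExec e) : S₂.IsExec e := by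
  obtain ⟨-, hinit, hchain⟩ := he
  refine ⟨fun i => h₂.1 _ (heT i), ?_, fun i => ?_⟩
  · rw [← h₁.source_eq_source h₂ (heT 0), hinit, h₁.2.1, h₂.2.1]
  · rw [← h₁.source_eq_source h₂ (heT (i + 1)), ← h₁.target_eq_target h₂ (heT i), hchain i]

theorem Extends.traceOf_eq (h₁ : S₁.Extends S T) (h₂ : S₂.Extends S T)
    (heT : ∀ i, e i ∈ T) : S₁.traceOf e = S₂.traceOf e :=
  funext fun i => ((h₁.2.2 _ (heT i)).2.2.2.1).trans ((h₂.2.2 _ (heT i)).2.2.2.1).symm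

end PTS

theorem IsMinExt.extends {S ST : PTS State Tr AP} {T : Finset Tr} (hST : IsMinExt S T ST) :
    ST.Extends S T := by
  obtain ⟨_, _, _, _, _, _, _, _, _, htrans, hinit, hdata, _, _, _, _, _, hlabel⟩ := hST
  refine ⟨fun t ht => by rw [htrans]; exact Or.inl (Or.inl ht), hinit, fun t ht => ?_⟩
  obtain ⟨hsrc, htgt, hprob⟩ := hdata t ht
  refine ⟨hsrc, htgt, hprob, ?_, ?_⟩
  · rw [hsrc, hlabel _ (Or.inl (Or.inl ⟨t, ht, rfl⟩))]
  · rw [htgt, hlabel _ (Or.inl (Or.inr ⟨t, ht, rfl⟩))]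

theorem sat_of_not_found_violation_general {State Tr AP : Type} (S ST : PTS State Tr AP)
    (T : Finset Tr) (hST : IsMinExt S T ST)
    (φ : Set (ℕ → Set AP)) (hnv : NotFoundViolation S T φ) :
    ∀ e : ℕ → Tr, (∀ i, e i ∈ T) → ST.IsExec e → ST.SatPath e φ := by
  obtain ⟨S', hS', hsat⟩ := hnv
  intro e heT he
  rw [PTS.SatPath, hST.extends.traceOf_eq hS' heT]
  exact hsat e (hST.extends.isExec_of_isExec hS' heT he)

/-- If the search `T` of `S` has not found a violation of a
linear-time property `φ`, then every execution path of `S_T` consisting solely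
of explored transitions satisfies `φ`. -/
theorem sat_of_not_found_violation {State Tr AP : Type} (S ST : PTS State Tr AP)
    (T : Finset Tr) (hT : ↑T ⊆ S.transitions) (hST : IsMinExt S T ST)
    (φ : Set (ℕ → Set AP)) (hnv : NotFoundViolation S T φ) :
    ∀ e : ℕ → Tr, (∀ i, e i ∈ T) → ST.IsExec e → ST.SatPath e φ :=
  sat_of_not_found_violation_general S ST T hST φ hnv
end

section
/- If a PTS S' extends a search T of a PTS S and A ⊆ T^ω ∩ Exec_S is closed in the prefix metric, then μ_S(A) = μ_{S'}(A); in particular, μ_S(T^ω ∩ Exec_S) = μ_{S_T}(T^ω ∩ Exec_{S_T}). -/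
open MeasureTheory

variable {AP : Type}

/- ## Probabilistic transition systems -/

variable {State Tr : Type}

/-! A closed set `A` of executions is the intersection of the decreasing sequence
`⋃_{l ∈ A[n]} B^l` of disjoint unions of cylinders, so by continuity from above
`μ(A) = inf_n Σ_{l ∈ A[n]} Π prob(tᵢ)`. For `A ⊆ T^ω` these sums only involve
probabilities of transitions in `T`, on which `S` and any extension `S'` agree. The second
claim is the first one for `S' = S_T` and the closed set of `T`-paths, which are the same
executions in `S` and in `S_T`. -/

theorem trunc_length (e : ℕ → Tr) (n : ℕ) : (trunc e n).length = n := by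
  simp [trunc]

theorem trunc_eq_trunc_iff {e e' : ℕ → Tr} {n : ℕ} :
    trunc e n = trunc e' n ↔ ∀ i < n, e i = e' i := by
  simp [trunc, List.map_inj_left]

theorem trunc_eq_trunc_of_le {e e' : ℕ → Tr} {m n : ℕ} (hmn : m ≤ n)
    (h : trunc e n = trunc e' n) : trunc e m = trunc e' m :=
  trunc_eq_trunc_iff.2 fun i hi => trunc_eq_trunc_iff.1 h i (hi.trans_le hmn)

theorem isPrefixOf_iff_eq_trunc {l : List Tr} {e : ℕ → Tr} :
    IsPrefixOf l e ↔ l = trunc e l.length := by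
  simp [IsPrefixOf, List.ext_get_iff, trunc]

theorem isPrefixOf_trunc_iff {e e' : ℕ → Tr} {n : ℕ} :
    IsPrefixOf (trunc e' n) e ↔ trunc e n = trunc e' n := by
  rw [isPrefixOf_iff_eq_trunc, trunc_length, eq_comm]

theorem pathDist_le_of_trunc_eq {e e' : ℕ → Tr} {n : ℕ} (h : trunc e n = trunc e' n) :
    pathDist e e' ≤ (1 / 2) ^ n :=
  csInf_le (⟨0, by rintro x ⟨k, -, rfl⟩; positivity⟩ : BddBelow _) ⟨n, h, rfl⟩

theorem trunc_eq_of_pathDist_lt {e e' : ℕ → Tr} {n : ℕ} (h : pathDist e e' < (1 / 2) ^ n) :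
    trunc e n = trunc e' n := by
  obtain ⟨-, ⟨k, hk, rfl⟩, hlt⟩ := exists_lt_of_csInf_lt
    (Set.image_nonempty.2 (⟨0, rfl⟩ : {k | trunc e k = trunc e' k}.Nonempty)) h
  have hnk : n ≤ k := by
    by_contra! hkn
    exact hlt.not_ge (pow_le_pow_of_le_one (by norm_num) (by norm_num) hkn.le)
  exact trunc_eq_trunc_of_le hnk hk

theorem closedPaths_iff {A : Set (ℕ → Tr)} :
    ClosedPaths A ↔ ∀ e, (∀ n, ∃ e' ∈ A, trunc e' n = trunc e n) → e ∈ A := by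
  refine forall_congr' fun e => imp_congr_left ⟨fun h n => ?_, fun h ε hε => ?_⟩
  · obtain ⟨e', he', hd⟩ := h ((1 / 2) ^ n) (by positivity)
    exact ⟨e', he', trunc_eq_of_pathDist_lt hd⟩
  · obtain ⟨n, hn⟩ := exists_pow_lt_of_lt_one hε (by norm_num : (1 : ℝ) / 2 < 1)
    obtain ⟨e', he', ht⟩ := h n
    exact ⟨e', he', (pathDist_le_of_trunc_eq ht).trans_lt hn⟩

theorem Set.Countable.setOf_forall_mem_list {α : Type*} {s : Set α} (hs : s.Countable) :
    {l : List α | ∀ x ∈ l, x ∈ s}.Countable := by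
  have := hs.to_subtype
  refine (Set.countable_range (List.map ((↑) : s → α))).mono fun l hl => ?_
  lift l to List s using hl
  exact ⟨l, rfl⟩

/-- The paper's `A[n]`. -/
def truncSet (A : Set (ℕ → Tr)) (n : ℕ) : Set (List Tr) :=
  (trunc · n) '' A

namespace PTS

variable (S : PTS State Tr AP)

theorem disjoint_cyl {l₁ l₂ : List Tr} (hlen : l₁.length = l₂.length)
    (hne : l₁ ≠ l₂) : Disjoint (S.Cyl l₁) (S.Cyl l₂) := by
  refine Set.disjoint_left.2 fun e ⟨_, h₁⟩ ⟨_, h₂⟩ => hne ?_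
  rw [isPrefixOf_iff_eq_trunc.1 h₁, isPrefixOf_iff_eq_trunc.1 h₂, hlen]

theorem countable_truncSet {A : Set (ℕ → Tr)} (hA : ∀ e ∈ A, S.IsExec e) (n : ℕ) :
    (truncSet A n).Countable := by
  refine S.countable_transitions.setOf_forall_mem_list.mono ?_
  rintro _ ⟨e, he, rfl⟩ t ht
  obtain ⟨i, -, rfl⟩ := List.mem_map.1 ht
  exact (hA e he).1 i

theorem mem_biUnion_cyl_truncSet {A : Set (ℕ → Tr)} {n : ℕ} {e : ℕ → Tr} :
    e ∈ ⋃ l ∈ truncSet A n, S.Cyl l ↔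
      S.IsExec e ∧ ∃ e' ∈ A, trunc e' n = trunc e n := by
  simp only [truncSet, Set.biUnion_image, Set.mem_iUnion₂, Cyl, Set.mem_ofPred_eq,
    isPrefixOf_trunc_iff, exists_prop]
  grind

theorem antitone_biUnion_cyl_truncSet (A : Set (ℕ → Tr)) :
    Antitone fun n => ⋃ l ∈ truncSet A n, S.Cyl l := fun m n hmn e he => by
  obtain ⟨hex, e', he', ht⟩ := S.mem_biUnion_cyl_truncSet.1 he
  exact S.mem_biUnion_cyl_truncSet.2 ⟨hex, e', he', trunc_eq_trunc_of_le hmn ht⟩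

theorem iInter_biUnion_cyl_truncSet {A : Set (ℕ → Tr)} (hA : ∀ e ∈ A, S.IsExec e)
    (hcl : ClosedPaths A) : ⋂ n, ⋃ l ∈ truncSet A n, S.Cyl l = A := by
  ext e
  simp only [Set.mem_iInter, S.mem_biUnion_cyl_truncSet]
  exact ⟨fun h => closedPaths_iff.1 hcl e fun n => (h n).2,
    fun he _ => ⟨hA e he, e, he, rfl⟩⟩

variable {S} in
theorem Extends.isExec_iff {S' : PTS State Tr AP} {T : Finset Tr} (h : S'.Extends S T)
    (hT : ↑T ⊆ S.transitions) {e : ℕ → Tr} (he : ∀ i, e i ∈ T) :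
    S'.IsExec e ↔ S.IsExec e := by
  obtain ⟨hmem, hinit, hdata⟩ := h
  have hsrc i : S'.source (e i) = S.source (e i) := (hdata _ (he i)).1
  have htgt i : S'.target (e i) = S.target (e i) := (hdata _ (he i)).2.1
  simp only [IsExec, hsrc, htgt, hinit]
  exact and_congr (iff_of_true (fun i => hmem _ (he i)) fun i => hT (he i)) Iff.rfl

theorem closedPaths_setOf_isExec (T : Finset Tr) :
    ClosedPaths {e : ℕ → Tr | (∀ i, e i ∈ T) ∧ S.IsExec e} := by
  refine closedPaths_iff.2 fun e he => ?_
  -- every condition on `e` only involves two consecutive transitions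
  have hagree i : ∃ e', ((∀ i, e' i ∈ T) ∧ S.IsExec e') ∧
      e' i = e i ∧ e' (i + 1) = e (i + 1) := by
    obtain ⟨e', he', ht⟩ := he (i + 2)
    exact ⟨e', he', trunc_eq_trunc_iff.1 ht i (by omega),
      trunc_eq_trunc_iff.1 ht (i + 1) (by omega)⟩
  refine ⟨fun i => ?_, fun i => ?_, ?_, fun i => ?_⟩
  · obtain ⟨e', ⟨hT', -⟩, hi, -⟩ := hagree i
    exact hi ▸ hT' i
  · obtain ⟨e', ⟨-, hmem, -⟩, hi, -⟩ := hagree i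
    exact hi ▸ hmem i
  · obtain ⟨e', ⟨-, -, hinit, -⟩, h0, -⟩ := hagree 0
    exact h0 ▸ hinit
  · obtain ⟨e', ⟨-, -, -, hchain⟩, hi, hi'⟩ := hagree i
    exact hi ▸ hi' ▸ hchain i

end PTS

namespace CylSpec

variable {S : PTS State Tr AP} {μ : Measure (ℕ → Tr)}

theorem measure_cyl_ne_top (hμ : CylSpec S μ) (l : List Tr) : μ (S.Cyl l) ≠ ⊤ := by
  by_cases hl : S.IsPrefExec l
  · exact hμ l hl ▸ ENNReal.ofReal_ne_top
  · have : S.Cyl l = ∅ := Set.eq_empty_of_forall_notMem fun e he => hl ⟨e, he⟩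
    simp [this]

theorem measure_biUnion_cyl (hμ : CylSpec S μ) {L : Set (List Tr)} (hL : L.Countable) {n : ℕ}
    (hlen : ∀ l ∈ L, l.length = n) (hpre : ∀ l ∈ L, S.IsPrefExec l) :
    μ (⋃ l ∈ L, S.Cyl l) = ∑' l : L, ENNReal.ofReal ((l.1.map S.prob).prod) := by
  have hdisj : L.PairwiseDisjoint S.Cyl := fun l₁ h₁ l₂ h₂ =>
    S.disjoint_cyl (by rw [hlen _ h₁, hlen _ h₂])
  rw [measure_biUnion hL hdisj fun _ _ => trivial]
  exact tsum_congr fun l => hμ l.1 (hpre l.1 l.2)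

theorem measure_eq_iInf_tsum (hμ : CylSpec S μ) {A : Set (ℕ → Tr)}
    (hA : ∀ e ∈ A, S.IsExec e) (hcl : ClosedPaths A) :
    μ A = ⨅ n, ∑' l : truncSet A n, ENNReal.ofReal ((l.1.map S.prob).prod) := by
  have hfin : μ (⋃ l ∈ truncSet A 0, S.Cyl l) ≠ ⊤ :=
    ne_top_of_le_ne_top (hμ.measure_cyl_ne_top [])
      (measure_mono fun e he => ⟨(S.mem_biUnion_cyl_truncSet.1 he).1, nofun⟩)
  conv_lhs => rw [← S.iInter_biUnion_cyl_truncSet hA hcl]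
  rw [(S.antitone_biUnion_cyl_truncSet A).measure_iInter
    (fun _ => MeasurableSet.nullMeasurableSet trivial) ⟨0, hfin⟩]
  refine iInf_congr fun n => hμ.measure_biUnion_cyl (S.countable_truncSet hA n) (n := n) ?_ ?_
  · rintro _ ⟨e, -, rfl⟩
    exact trunc_length e n
  · rintro _ ⟨e, he, rfl⟩
    exact ⟨e, hA e he, isPrefixOf_trunc_iff.2 rfl⟩

end CylSpec

theorem PTS.Extends.measure_eq {S S' : PTS State Tr AP} {T : Finset Tr} (h : S'.Extends S T)
    (hT : ↑T ⊆ S.transitions) {μS μS' : Measure (ℕ → Tr)} (hμS : CylSpec S μS)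
    (hμS' : CylSpec S' μS') {A : Set (ℕ → Tr)}
    (hAT : ∀ e ∈ A, (∀ i, e i ∈ T) ∧ S.IsExec e) (hcl : ClosedPaths A) :
    μS A = μS' A := by
  have hA' e (he : e ∈ A) : S'.IsExec e := (h.isExec_iff hT (hAT e he).1).2 (hAT e he).2
  rw [hμS.measure_eq_iInf_tsum (fun e he => (hAT e he).2) hcl, hμS'.measure_eq_iInf_tsum hA' hcl]
  refine iInf_congr fun n => tsum_congr fun ⟨l, hl⟩ => ?_
  obtain ⟨e, he, rfl⟩ := hl
  refine congrArg (ENNReal.ofReal ·.prod) (List.map_congr_left fun t ht => ?_)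
  obtain ⟨i, -, rfl⟩ := List.mem_map.1 ht
  exact (h.2.2 _ ((hAT e he).1 i)).2.2.1.symm

/-- If `S'` extends the search `T` of `S` and
`A ⊆ T^ω ∩ Exec_S` is closed in the prefix metric, then `μ_S(A) = μ_{S'}(A)`;
in particular `μ_S(T^ω ∩ Exec_S) = μ_{S_T}(T^ω ∩ Exec_{S_T})`. -/
theorem measure_eq_of_closed {State Tr AP : Type} (S S' ST : PTS State Tr AP)
    (T : Finset Tr) (hT : ↑T ⊆ S.transitions) (h : S'.Extends S T)
    (hST : IsMinExt S T ST)
    (μS μS' μST : MeasureTheory.Measure (ℕ → Tr))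
    (hμS : CylSpec S μS) (hμS' : CylSpec S' μS') (hμST : CylSpec ST μST)
    (A : Set (ℕ → Tr)) (hAT : ∀ e ∈ A, (∀ i, e i ∈ T) ∧ S.IsExec e)
    (hcl : ClosedPaths A) :
    μS A = μS' A ∧
      μS { e : ℕ → Tr | (∀ i, e i ∈ T) ∧ S.IsExec e } =
        μST { e : ℕ → Tr | (∀ i, e i ∈ T) ∧ ST.IsExec e } := by
  refine ⟨h.measure_eq hT hμS hμS' hAT hcl, ?_⟩
  have hTexec : {e : ℕ → Tr | (∀ i, e i ∈ T) ∧ ST.IsExec e} =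
      {e : ℕ → Tr | (∀ i, e i ∈ T) ∧ S.IsExec e} :=
    Set.ext fun e => and_congr_right fun he => hST.extends.isExec_iff hT he
  rw [hTexec]
  exact hST.extends.measure_eq hT hμS hμST (fun _ he => he) (S.closedPaths_setOf_isExec T)
end
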